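/- With T_n denoting F_n with its last two letters swapped, for all n ≥ 3 one has F_n = F_{n-2} · T_{n-1} and T_n = F_{n-2} · F_{n-1} (almost-commutativity of consecutive Fibonacci words). -/
import Mathlib


/-- The two-letter alphabet: `A` and `B`. -/
inductive Letter : Type
  | A : Letter
  | B : Letter
  deriving DecidableEq, Repr

open Letter

/-- The Fibonacci substitution θ : a → ab, b → a. -/
def theta : Letter → List Letter
  | A => [A, B]
  | B => [A]

/-- Extension of the substitution to words, by concatenation. -/
def substWord (w : List Letter) : List Letter := w.flatMap theta

/-- The n-th finite Fibonacci word F_n = θ^n(a). -/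
def FibWord (n : ℕ) : List Letter := substWord^[n] [A]

/-- The infinite Fibonacci word (each F_n is a prefix of all later ones,
and `FibWord (k+1)` has length `fib (k+3) ≥ k+1`, so index `k` is defined). -/
def FibSeq (k : ℕ) : Letter := (FibWord (k + 1)).getD k A

/-- `Wword n` is the Fibonacci word F_n with its final two letters removed. -/
def Wword (n : ℕ) : List Letter := (FibWord n).dropLast.dropLast

/-- The final two letters `uv` of F_n. -/
def lastTwo (n : ℕ) : List Letter := (FibWord n).drop ((FibWord n).length - 2)

/-- `Tword n` is F_n with its final two letters exchanged: if F_n = W_n·(uv)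
then T_n = W_n·(vu). -/
def Tword (n : ℕ) : List Letter := Wword n ++ (lastTwo n).reverse

lemma substWord_append (u v : List Letter) :
    substWord (u ++ v) = substWord u ++ substWord v := by
  simp [substWord]

lemma fib_succ (n : ℕ) : FibWord (n + 1) = substWord (FibWord n) := by
  simp [FibWord, Function.iterate_succ_apply']

lemma fib_rec (n : ℕ) : FibWord (n + 2) = FibWord (n + 1) ++ FibWord n := by
  induction n with
  | zero => decide
  | succ m ih =>
      rw [show m + 1 + 2 = (m + 2) + 1 from rfl, fib_succ, ih, substWord_append,
        ← fib_succ, ← fib_succ]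
      show FibWord (m + 2) ++ _ = _
      rw [ih]

/-- Alternating final pair. -/
def pp (n : ℕ) : List Letter := if n % 2 = 0 then [B, A] else [A, B]

lemma pp_succ (n : ℕ) : pp (n + 1) = (pp n).reverse := by
  rcases Nat.mod_two_eq_zero_or_one n with h | h <;>
    simp [pp, h, Nat.add_mod, Nat.succ_mod_two_eq_zero_iff, Nat.succ_mod_two_eq_one_iff]

lemma pp_len (n : ℕ) : ∃ x y, pp n = [x, y] := by
  rcases Nat.mod_two_eq_zero_or_one n with h | h <;> simp [pp, h]

lemma claimC (n : ℕ) : ∃ w, FibWord (n + 1) ++ FibWord n = w ++ pp n ∧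
    FibWord n ++ FibWord (n + 1) = w ++ (pp n).reverse := by
  induction n with
  | zero => exact ⟨[A], by decide, by decide⟩
  | succ m ih =>
      obtain ⟨w, h1, h2⟩ := ih
      refine ⟨FibWord (m + 1) ++ w, ?_, ?_⟩
      · show FibWord (m + 2) ++ _ = _
        rw [fib_rec, pp_succ, List.append_assoc, List.append_assoc, h2]
      · show _ ++ FibWord (m + 2) = _
        rw [fib_rec, pp_succ, List.reverse_reverse, List.append_assoc, h1]

lemma tword_eq (n : ℕ) : Tword (n + 2) = FibWord n ++ FibWord (n + 1) := by
  obtain ⟨w, h1, h2⟩ := claimC n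
  obtain ⟨x, y, hxy⟩ := pp_len n
  have hF : FibWord (n + 2) = w ++ [x, y] := by rw [fib_rec, h1, hxy]
  have hW : Wword (n + 2) = w := by
    simp [Wword, hF, List.dropLast_append_cons]
  have hL : lastTwo (n + 2) = [x, y] := by
    simp [lastTwo, hF, List.drop_left']
  rw [Tword, hW, hL, h2, hxy]

/-- Almost-commutativity of consecutive Fibonacci words: for n ≥ 3,
F_n = F_{n-2} · T_{n-1} and T_n = F_{n-2} · F_{n-1}. -/
theorem fib_word_almost_commutative (n : ℕ) (hn : 3 ≤ n) :
    FibWord n = FibWord (n - 2) ++ Tword (n - 1) ∧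
    Tword n = FibWord (n - 2) ++ FibWord (n - 1) := by
  obtain ⟨m, rfl⟩ : ∃ m, n = m + 3 := ⟨n - 3, by omega⟩
  constructor
  · show FibWord (m + 3) = FibWord (m + 1) ++ Tword (m + 2)
    rw [tword_eq, show m + 3 = (m + 1) + 2 from rfl, fib_rec,
      show m + 1 + 1 = m + 2 from rfl, fib_rec, List.append_assoc]
  · show Tword (m + 3) = FibWord (m + 1) ++ FibWord (m + 2)
    exact tword_eq (m + 1)
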